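/- arXiv:2504.21178 — 5 statements merged into one kernel-verified Lean document; each statement's English description precedes it below -/
import Mathlib

section
/- Let x_1, ..., x_N be N distinct real numbers with minimum spacing D_min = min_{1 ≤ i < k ≤ N} |x_i − x_k| and maximum spacing D_max = max_{1 ≤ i < k ≤ N} |x_i − x_k|, let a_1, ..., a_A be complex numbers, and let E(x) = ∏_{j=1}^{A} (x − a_j). If x_k is a safe point (i.e., |x_k − a_j| ≥ D_min/2 for every j), then for any evaluation point x_i one has |E(x_i)| ≤ (1 + 2·D_max/D_min)^A · |E(x_k)|. -/
/-!
Each factor of `E` grows by at most the factor `1 + 2 Dmax / Dmin` when the evaluation point moves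
from the safe point `x k` to `x i`: by the triangle inequality `|x i - a| ≤ Dmax + |x k - a|`, and
`Dmax ≤ (2 Dmax / Dmin) |x k - a|` because `|x k - a| ≥ Dmin / 2`.
-/

open Finset

theorem norm_sub_le_one_add_mul_norm_sub {E : Type*} [SeminormedAddGroup E] {y z a : E} {D d : ℝ}
    (hd : 0 < d) (hyz : ‖y - z‖ ≤ D) (hza : d / 2 ≤ ‖z - a‖) :
    ‖y - a‖ ≤ (1 + 2 * D / d) * ‖z - a‖ := by
  have hD : D ≤ 2 * D / d * ‖z - a‖ := by
    rw [div_mul_eq_mul_div, le_div_iff₀ hd]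
    nlinarith [(norm_nonneg _).trans hyz]
  calc ‖y - a‖ ≤ ‖y - z‖ + ‖z - a‖ := norm_sub_le_norm_sub_add_norm_sub y z a
    _ ≤ (1 + 2 * D / d) * ‖z - a‖ := by linarith

theorem norm_prod_le_pow_card_mul_norm_prod {ι R : Type*} [SeminormedCommRing R] [NormMulClass R]
    [NormOneClass R] (s : Finset ι) {f g : ι → R} {c : ℝ} (h : ∀ j ∈ s, ‖f j‖ ≤ c * ‖g j‖) :
    ‖∏ j ∈ s, f j‖ ≤ c ^ s.card * ‖∏ j ∈ s, g j‖ := by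
  rw [norm_prod, norm_prod, ← prod_const, ← prod_mul_distrib]
  exact prod_le_prod (fun j _ => norm_nonneg _) h

def pairwiseDistances {ι : Type*} (x : ι → ℝ) : Set ℝ :=
  {d | ∃ i k : ι, i ≠ k ∧ d = |x i - x k|}

theorem pos_of_mem_pairwiseDistances {ι : Type*} {x : ι → ℝ} (hx : Function.Injective x) {d : ℝ}
    (hd : d ∈ pairwiseDistances x) : 0 < d := by
  obtain ⟨i, k, hik, rfl⟩ := hd
  exact abs_pos.mpr (sub_ne_zero.mpr (hx.ne hik))

theorem abs_sub_le_of_isGreatest_pairwiseDistances {ι : Type*} {x : ι → ℝ} {D : ℝ}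
    (hD : IsGreatest (pairwiseDistances x) D) (i k : ι) : |x i - x k| ≤ D := by
  rcases eq_or_ne i k with rfl | hik
  · obtain ⟨p, q, -, hpq⟩ := hD.1
    simp [hpq]
  · exact hD.2 ⟨i, k, hik, rfl⟩

theorem safe_point_ratio_bound_general {N A : ℕ}
    (x : Fin N → ℝ) (hx : Function.Injective x)
    (Dmin Dmax : ℝ)
    (hDmin : IsLeast {d : ℝ | ∃ i k : Fin N, i ≠ k ∧ d = |x i - x k|} Dmin)
    (hDmax : IsGreatest {d : ℝ | ∃ i k : Fin N, i ≠ k ∧ d = |x i - x k|} Dmax)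
    (a : Fin A → ℂ) (k : Fin N)
    (hsafe : ∀ j : Fin A, Dmin / 2 ≤ ‖(x k : ℂ) - a j‖)
    (i : Fin N) :
    ‖∏ j : Fin A, ((x i : ℂ) - a j)‖
      ≤ (1 + 2 * Dmax / Dmin) ^ A * ‖∏ j : Fin A, ((x k : ℂ) - a j)‖ := by
  have hDmin_pos : 0 < Dmin := pos_of_mem_pairwiseDistances hx hDmin.1
  have hik : ‖(x i : ℂ) - x k‖ ≤ Dmax := by
    rw [← Complex.ofReal_sub, Complex.norm_real, Real.norm_eq_abs]
    exact abs_sub_le_of_isGreatest_pairwiseDistances hDmax i k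
  simpa using norm_prod_le_pow_card_mul_norm_prod univ fun j _ =>
    norm_sub_le_one_add_mul_norm_sub hDmin_pos hik (hsafe j)

/-- If `x k` is a safe point, then for any evaluation point `x i`,
`|E(x i)| ≤ (1 + 2 Dmax / Dmin)^A * |E(x k)|`, where `E(x) = ∏ j, (x - a j)`. -/
theorem safe_point_ratio_bound {N A : ℕ} (hN : 2 ≤ N)
    (x : Fin N → ℝ) (hx : Function.Injective x)
    (Dmin Dmax : ℝ)
    (hDmin : IsLeast {d : ℝ | ∃ i k : Fin N, i ≠ k ∧ d = |x i - x k|} Dmin)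
    (hDmax : IsGreatest {d : ℝ | ∃ i k : Fin N, i ≠ k ∧ d = |x i - x k|} Dmax)
    (a : Fin A → ℂ) (k : Fin N)
    (hsafe : ∀ j : Fin A, Dmin / 2 ≤ ‖(x k : ℂ) - a j‖)
    (i : Fin N) :
    ‖∏ j : Fin A, ((x i : ℂ) - a j)‖
      ≤ (1 + 2 * Dmax / Dmin) ^ A * ‖∏ j : Fin A, ((x k : ℂ) - a j)‖ :=
  safe_point_ratio_bound_general x hx Dmin Dmax hDmin hDmax a k hsafe i
end

section
/- Let H be a real polynomial of degree at most d, let y_0, y_1, ..., y_d be d+1 distinct real numbers with |y_j − y_k| ≥ d_min > 0 for all j ≠ k, and let z be a real number with |z − y_k| ≤ d_max for every k, where d_max ≥ d_min. Then |H(z)| ≤ (d_max/d_min)^d · ∑_{j=0}^{d} |H(y_j)|. -/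
open Polynomial Finset Lagrange

/- Lagrange interpolation writes `H(z) = ∑ⱼ H(yⱼ) ℓⱼ(z)`, and each factor `(z - yₖ)/(yⱼ - yₖ)` of the
basis polynomial `ℓⱼ` has modulus at most `dmax/dmin`, so `|ℓⱼ(z)| ≤ (dmax/dmin)^d`. -/

section

variable {F ι : Type*} [NormedField F] [DecidableEq ι] {s : Finset ι} {v : ι → F}

theorem Lagrange.norm_eval_basisDivisor (x y z : F) :
    ‖(basisDivisor x y).eval z‖ = ‖z - y‖ / ‖x - y‖ := by
  rw [basisDivisor, eval_mul, eval_C, eval_sub, eval_X, eval_C, norm_mul, norm_inv,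
    inv_mul_eq_div]

theorem Lagrange.norm_eval_basis_le {a b : ℝ} {i : ι} (hi : i ∈ s) (ha : 0 < a)
    (hsep : ∀ j ∈ s, j ≠ i → a ≤ ‖v i - v j‖) {z : F} (hz : ∀ j ∈ s, ‖z - v j‖ ≤ b) :
    ‖(Lagrange.basis s v i).eval z‖ ≤ (b / a) ^ (#s - 1) := by
  rw [Lagrange.basis, eval_prod, norm_prod, ← card_erase_of_mem hi, ← prod_const]
  refine prod_le_prod (fun _ _ ↦ norm_nonneg _) fun j hj ↦ ?_
  obtain ⟨hji, hj⟩ := mem_erase.mp hj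
  rw [norm_eval_basisDivisor]
  exact div_le_div₀ ((norm_nonneg _).trans (hz j hj)) (hz j hj) ha (hsep j hj hji)

theorem Lagrange.norm_eval_le_mul_sum_norm_eval_nodes {f : F[X]} (hvs : Set.InjOn v s)
    (hf : f.degree < #s) {z : F} {C : ℝ} (hC : ∀ i ∈ s, ‖(Lagrange.basis s v i).eval z‖ ≤ C) :
    ‖f.eval z‖ ≤ C * ∑ i ∈ s, ‖f.eval (v i)‖ := by
  have hinterp : f.eval z = ∑ i ∈ s, f.eval (v i) * (Lagrange.basis s v i).eval z := by
    conv_lhs => rw [eq_interpolate hvs hf, interpolate_apply]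
    simp only [eval_finsetSum, eval_mul, eval_C]
  calc ‖f.eval z‖ ≤ ∑ i ∈ s, ‖f.eval (v i)‖ * ‖(Lagrange.basis s v i).eval z‖ := by
        rw [hinterp]
        exact (norm_sum_le _ _).trans_eq (sum_congr rfl fun _ _ ↦ norm_mul _ _)
    _ ≤ ∑ i ∈ s, ‖f.eval (v i)‖ * C :=
        sum_le_sum fun i hi ↦ mul_le_mul_of_nonneg_left (hC i hi) (norm_nonneg _)
    _ = C * ∑ i ∈ s, ‖f.eval (v i)‖ := by rw [← sum_mul, mul_comm]

theorem Lagrange.norm_eval_le_of_separated_nodes {f : F[X]} (hf : f.degree < #s) {a b : ℝ}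
    (ha : 0 < a) (hsep : ∀ i ∈ s, ∀ j ∈ s, i ≠ j → a ≤ ‖v i - v j‖) {z : F}
    (hz : ∀ j ∈ s, ‖z - v j‖ ≤ b) :
    ‖f.eval z‖ ≤ (b / a) ^ (#s - 1) * ∑ i ∈ s, ‖f.eval (v i)‖ := by
  have hvs : Set.InjOn v s := fun i hi j hj hij ↦ by
    by_contra hne
    have := hsep i hi j hj hne
    rw [hij, sub_self, norm_zero] at this
    exact ha.not_ge this
  exact norm_eval_le_mul_sum_norm_eval_nodes hvs hf fun i hi ↦
    norm_eval_basis_le hi ha (fun j hj hji ↦ hsep i hi j hj hji.symm) hz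

end

theorem polynomial_interpolation_bound_general {d : ℕ} (H : Polynomial ℝ)
    (hH : H.natDegree ≤ d)
    (y : Fin (d + 1) → ℝ)
    (dmin dmax : ℝ) (hdmin : 0 < dmin)
    (hy : ∀ j k : Fin (d + 1), j ≠ k → dmin ≤ |y j - y k|)
    (z : ℝ) (hz : ∀ k : Fin (d + 1), |z - y k| ≤ dmax) :
    |H.eval z| ≤ (dmax / dmin) ^ d * ∑ j : Fin (d + 1), |H.eval (y j)| := by
  have hdeg : H.degree < #(univ : Finset (Fin (d + 1))) := by
    rw [card_univ, Fintype.card_fin]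
    exact degree_le_natDegree.trans_lt (by exact_mod_cast Nat.lt_succ_of_le hH)
  simpa [Real.norm_eq_abs] using
    norm_eval_le_of_separated_nodes hdeg hdmin (fun j _ k _ ↦ hy j k) (fun k _ ↦ hz k)

/-- If `H` is a real polynomial of degree at most `d`, the nodes
`y 0, …, y d` have pairwise distances at least `dmin > 0`, and `z` is within
distance `dmax ≥ dmin` of every node, then
`|H(z)| ≤ (dmax/dmin)^d * ∑ j, |H(y j)|`. -/
theorem polynomial_interpolation_bound {d : ℕ} (H : Polynomial ℝ)
    (hH : H.natDegree ≤ d)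
    (y : Fin (d + 1) → ℝ)
    (dmin dmax : ℝ) (hdmin : 0 < dmin) (hdd : dmin ≤ dmax)
    (hy : ∀ j k : Fin (d + 1), j ≠ k → dmin ≤ |y j - y k|)
    (z : ℝ) (hz : ∀ k : Fin (d + 1), |z - y k| ≤ dmax) :
    |H.eval z| ≤ (dmax / dmin) ^ d * ∑ j : Fin (d + 1), |H.eval (y j)| :=
  polynomial_interpolation_bound_general H hH y dmin dmax hdmin hy z hz
end

section
/- Let T ≥ 2 be an integer and let R_1, ..., R_T, S_1, ..., S_T be mutually independent real-valued random variables, each with zero mean, with E[R_1^2] = E[S_1^2] = σ^2 and E[R_t^2] = E[S_t^2] = 1 for 2 ≤ t ≤ T. Fix a real number x and define r = (∑_{t=1}^{T−1} R_{t+1} x^t)·(∑_{t=1}^{T−1} S_{t+1} x^t), s = ∑_{t=1}^{T−1} (R_{t+1} S_1 + R_1 S_{t+1}) x^{T+t}, and u = R_1 S_1 x^{2T}. Then for all real β > 0 and real n ≥ 1, P(|r + s·n^{−1/2} + u·n^{−1}| ≥ n^{β}) ≤ 9 n^{−2β} [ ∑_{t=2}^{T} (t−1) x^{2t} + ∑_{t=T+1}^{2T−2}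 (2T−1−t) x^{2t} + n^{−1}·2σ^2 ∑_{t=1}^{T−1} x^{2(T+t)} + n^{−2}·σ^4 x^{4T} ]. -/
/-!
Write `A = ∑_{t=1}^{T-1} R_{t+1} x^t`, `B = ∑_{t=1}^{T-1} S_{t+1} x^t`, and `A'`, `B'` for the same
sums with weights `x^{T+t}`, so that `r = A B` and `s = S_1 A' + R_1 B'`. Chebyshev's inequality
for the second moment together with `(a + b + c)^2 ≤ 3 (a^2 + b^2 + c^2)` bounds the probability by
`3 n^{-2β} (E r^2 + E s^2 / n + E u^2 / n^2)`, and the three second moments are computed exactly.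
`A` and `B` are independent, so `E r^2 = E A^2 E B^2 = (∑ x^{2t})^2`, whose expansion gives the two
weighted sums. `S_1 A'` and `R_1 B'` are uncorrelated, so `E s^2 = σ^2 E A'^2 + σ^2 E B'^2`, and
`E u^2 = σ^4 x^{4T}`. Every independence used is an instance of one principle: functions of
disjoint sets of the coordinates `R_t`, `S_t` are independent.
-/

open MeasureTheory ProbabilityTheory

namespace Finset

theorem pow_mul_sum_Icc_pow {R : Type*} [CommRing R] (y : R) (m : ℕ) :
    y ^ (m + 1) * ∑ t ∈ Icc 1 m, y ^ t = ∑ t ∈ Icc (m + 2) (2 * m + 1), y ^ t := by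
  rw [show m + 2 = (m + 1) + 1 by ring, show 2 * m + 1 = (m + 1) + m by ring,
    ← map_add_left_Icc, sum_map, mul_sum]
  simp [pow_add]

-- The upper limit `2 * m + 1` only adds a vanishing term, but it makes the induction uniform.
theorem sq_sum_Icc_pow' {R : Type*} [CommRing R] (y : R) (m : ℕ) :
    (∑ t ∈ Icc 1 m, y ^ t) ^ 2
      = ∑ t ∈ Icc 2 (m + 1), ((t : R) - 1) * y ^ t
        + ∑ t ∈ Icc (m + 2) (2 * m + 1), (2 * (m : R) + 1 - t) * y ^ t := by
  induction m with
  | zero => simp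
  | succ m ih =>
    rw [sum_Icc_succ_top (by omega : 1 ≤ m + 1), add_sq, ih,
      sum_Icc_succ_top (by omega : 2 ≤ m + 1 + 1), show m + 1 + 2 = m + 3 by ring,
      show 2 * (m + 1) + 1 = 2 * m + 3 by ring]
    set c : ℕ → R := fun t => 2 * ((m + 1 : ℕ) : R) + 1 - t with hc
    have hbot : ∑ t ∈ Icc (m + 2) (2 * m + 3), c t * y ^ t
        = c (m + 2) * y ^ (m + 2) + ∑ t ∈ Icc (m + 3) (2 * m + 3), c t * y ^ t := by
      rw [← add_sum_Ioc_eq_sum_Icc (by omega), ← Icc_add_one_left_eq_Ioc]; rfl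
    have htop : ∑ t ∈ Icc (m + 2) (2 * m + 3), c t * y ^ t
        = ∑ t ∈ Icc (m + 2) (2 * m + 1), c t * y ^ t
          + c (2 * m + 2) * y ^ (2 * m + 2) + c (2 * m + 3) * y ^ (2 * m + 3) := by
      rw [sum_Icc_succ_top (by omega), sum_Icc_succ_top (by omega)]
    have hcoeff : ∑ t ∈ Icc (m + 2) (2 * m + 1), c t * y ^ t
        = ∑ t ∈ Icc (m + 2) (2 * m + 1), (2 * (m : R) + 1 - t) * y ^ t
          + 2 * ∑ t ∈ Icc (m + 2) (2 * m + 1), y ^ t := by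
      rw [mul_sum, ← sum_add_distrib]
      exact sum_congr rfl fun t _ => by simp only [hc]; push_cast; ring
    have hshift := pow_mul_sum_Icc_pow y m
    simp only [hc] at hbot htop hcoeff ⊢
    push_cast at hbot htop hcoeff ⊢
    linear_combination hbot - htop - hcoeff + 2 * hshift

theorem sq_sum_Icc_pow {R : Type*} [CommRing R] (y : R) (m : ℕ) :
    (∑ t ∈ Icc 1 m, y ^ t) ^ 2
      = ∑ t ∈ Icc 2 (m + 1), ((t : R) - 1) * y ^ t
        + ∑ t ∈ Icc (m + 2) (2 * m), (2 * (m : R) + 1 - t) * y ^ t := by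
  rcases m.eq_zero_or_pos with rfl | hm
  · simp
  rw [sq_sum_Icc_pow', sum_Icc_succ_top (by omega : m + 2 ≤ 2 * m + 1)]
  push_cast
  ring

end Finset

section Moments

variable {Ω : Type*} [MeasurableSpace Ω] {μ : Measure Ω}

lemma measureReal_abs_ge_le_integral_sq_div {X : Ω → ℝ} (hX : Integrable (fun ω => X ω ^ 2) μ)
    {ε : ℝ} (hε : 0 < ε) : μ.real {ω | ε ≤ |X ω|} ≤ (∫ ω, X ω ^ 2 ∂μ) / ε ^ 2 := by
  have hset : {ω | ε ≤ |X ω|} = {ω | ε ^ 2 ≤ X ω ^ 2} := by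
    ext ω
    rw [Set.mem_ofPred_eq, Set.mem_ofPred_eq, ← sq_abs (X ω),
      pow_le_pow_iff_left₀ hε.le (abs_nonneg _) two_ne_zero]
  rw [hset, le_div_iff₀ (by positivity), mul_comm]
  exact mul_meas_ge_le_integral_of_nonneg (ae_of_all _ fun ω => sq_nonneg _) hX _

lemma integral_add_add_sq_le {a b c : Ω → ℝ} (ha : MemLp a 2 μ) (hb : MemLp b 2 μ)
    (hc : MemLp c 2 μ) :
    ∫ ω, (a ω + b ω + c ω) ^ 2 ∂μ
      ≤ 3 * (∫ ω, a ω ^ 2 ∂μ + ∫ ω, b ω ^ 2 ∂μ + ∫ ω, c ω ^ 2 ∂μ) := by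
  have hab : Integrable (fun ω => a ω ^ 2 + b ω ^ 2) μ := ha.integrable_sq.add hb.integrable_sq
  rw [← integral_add ha.integrable_sq hb.integrable_sq, ← integral_add hab hc.integrable_sq,
    ← integral_const_mul]
  refine integral_mono ((ha.add hb).add hc).integrable_sq
    ((hab.add hc.integrable_sq).const_mul 3) fun ω => ?_
  nlinarith [sq_nonneg (a ω - b ω), sq_nonneg (b ω - c ω), sq_nonneg (a ω - c ω)]

lemma integral_mul_const_sq (X : Ω → ℝ) (c : ℝ) :
    ∫ ω, (X ω * c) ^ 2 ∂μ = c ^ 2 * ∫ ω, X ω ^ 2 ∂μ := by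
  simp_rw [mul_pow]
  rw [integral_mul_const, mul_comm]

lemma measureReal_abs_add_mul_add_mul_ge_le {a b c : Ω → ℝ} (ha : MemLp a 2 μ)
    (hb : MemLp b 2 μ) (hc : MemLp c 2 μ) (p q : ℝ) {ε : ℝ} (hε : 0 < ε) :
    μ.real {ω | ε ≤ |a ω + b ω * p + c ω * q|}
      ≤ 3 / ε ^ 2 * (∫ ω, a ω ^ 2 ∂μ + p ^ 2 * ∫ ω, b ω ^ 2 ∂μ + q ^ 2 * ∫ ω, c ω ^ 2 ∂μ) := by
  calc μ.real {ω | ε ≤ |a ω + b ω * p + c ω * q|}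
      ≤ (∫ ω, (a ω + b ω * p + c ω * q) ^ 2 ∂μ) / ε ^ 2 :=
        measureReal_abs_ge_le_integral_sq_div
          ((ha.add (hb.mul_const p)).add (hc.mul_const q)).integrable_sq hε
    _ ≤ 3 * (∫ ω, a ω ^ 2 ∂μ + ∫ ω, (b ω * p) ^ 2 ∂μ + ∫ ω, (c ω * q) ^ 2 ∂μ) / ε ^ 2 := by
        gcongr
        exact integral_add_add_sq_le ha (hb.mul_const p) (hc.mul_const q)
    _ = _ := by
        rw [integral_mul_const_sq, integral_mul_const_sq]
        ring

lemma integral_add_sq_of_integral_mul_eq_zero {X Y : Ω → ℝ} (hX : MemLp X 2 μ)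
    (hY : MemLp Y 2 μ) (hXY : ∫ ω, X ω * Y ω ∂μ = 0) :
    ∫ ω, (X ω + Y ω) ^ 2 ∂μ = ∫ ω, X ω ^ 2 ∂μ + ∫ ω, Y ω ^ 2 ∂μ := by
  have hXY2 : Integrable (fun ω => X ω ^ 2 + Y ω ^ 2) μ := hX.integrable_sq.add hY.integrable_sq
  have hXYi : Integrable (fun ω => 2 * (X ω * Y ω)) μ := (hX.integrable_mul hY).const_mul 2
  simp_rw [add_sq', mul_assoc]
  rw [integral_add hXY2 hXYi, integral_add hX.integrable_sq hY.integrable_sq, integral_const_mul,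
    hXY, mul_zero, add_zero]

lemma integral_sq_sum_of_pairwise_indepFun [IsFiniteMeasure μ] {ι : Type*} {s : Finset ι}
    {X : ι → Ω → ℝ} (hL2 : ∀ i ∈ s, MemLp (X i) 2 μ) (hmean : ∀ i ∈ s, ∫ ω, X i ω ∂μ = 0)
    (hind : Set.Pairwise ↑s fun i j => X i ⟂ᵢ[μ] X j) :
    ∫ ω, (∑ i ∈ s, X i ω) ^ 2 ∂μ = ∑ i ∈ s, ∫ ω, X i ω ^ 2 ∂μ := by
  have hsum := IndepFun.variance_sum hL2 hind
  rw [variance_of_integral_eq_zero (memLp_finsetSum' s hL2).aemeasurable] at hsum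
  · simp only [Finset.sum_apply] at hsum
    rw [hsum]
    exact Finset.sum_congr rfl fun i hi =>
      variance_of_integral_eq_zero (hL2 i hi).aemeasurable (hmean i hi)
  · simp only [Finset.sum_apply]
    rw [integral_finsetSum s fun i hi => (hL2 i hi).integrable one_le_two]
    exact Finset.sum_eq_zero hmean

namespace ProbabilityTheory.IndepFun

variable {X Y : Ω → ℝ}

lemma integral_mul_sq (h : X ⟂ᵢ[μ] Y) (hX : AEStronglyMeasurable X μ)
    (hY : AEStronglyMeasurable Y μ) :
    ∫ ω, (X ω * Y ω) ^ 2 ∂μ = (∫ ω, X ω ^ 2 ∂μ) * ∫ ω, Y ω ^ 2 ∂μ := by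
  have hsq := h.comp (measurable_id.pow_const 2) (measurable_id.pow_const 2)
  simp_rw [mul_pow]
  exact hsq.integral_fun_mul_eq_mul_integral (hX.pow 2) (hY.pow 2)

lemma memLp_two_mul (h : X ⟂ᵢ[μ] Y) (hX : MemLp X 2 μ) (hY : MemLp Y 2 μ) :
    MemLp (fun ω => X ω * Y ω) 2 μ := by
  have hsq := h.comp (measurable_id.pow_const 2) (measurable_id.pow_const 2)
  refine (memLp_two_iff_integrable_sq (hX.1.mul hY.1)).2 ?_
  simp only [Pi.mul_apply, mul_pow]
  exact hsq.integrable_mul hX.integrable_sq hY.integrable_sq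

end ProbabilityTheory.IndepFun

end Moments

lemma ProbabilityTheory.iIndepFun.indepFun_of_measurable_iSup_comap {Ω ι κ β : Type*}
    [MeasurableSpace Ω] {μ : Measure Ω} [mβ : MeasurableSpace β] {g : κ → Ω → β} {e : ι → κ}
    (hg : iIndepFun (g ∘ e) μ) (hmeas : ∀ i, Measurable (g (e i))) {K L : Set κ}
    (hK : K ⊆ Set.range e) (hL : L ⊆ Set.range e) (hKL : Disjoint K L) {F G : Ω → ℝ}
    (hF : Measurable[⨆ k ∈ K, mβ.comap (g k)] F) (hG : Measurable[⨆ k ∈ L, mβ.comap (g k)] G) :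
    F ⟂ᵢ[μ] G := by
  have hreindex : ∀ {K : Set κ}, K ⊆ Set.range e →
      ⨆ k ∈ K, mβ.comap (g k) = ⨆ i ∈ e ⁻¹' K, mβ.comap ((g ∘ e) i) := fun hK => by
    conv_lhs => rw [← Set.image_preimage_eq_of_subset hK]
    exact iSup_image
  rw [IndepFun_iff_Indep]
  refine indep_of_indep_of_le ?_ hF.comap_le hG.comap_le
  rw [hreindex hK, hreindex hL]
  exact indep_iSup_of_disjoint (fun i => (hmeas i).comap_le) hg.iIndep (hKL.preimage e)

section TailSum

variable {Ω : Type*}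

def tailSum (X : ℕ → Ω → ℝ) (w : ℕ → ℝ) (m : ℕ) (ω : Ω) : ℝ :=
  ∑ t ∈ Finset.Icc 1 m, X (t + 1) ω * w t

lemma measurable_tailSum {mΩ : MeasurableSpace Ω} {X : ℕ → Ω → ℝ} (w : ℕ → ℝ) {m : ℕ}
    (hX : ∀ t ∈ Finset.Icc 1 m, Measurable[mΩ] (X (t + 1))) : Measurable[mΩ] (tailSum X w m) :=
  Finset.measurable_sum _ fun t ht => (hX t ht).mul_const _

lemma sum_mul_add_mul_eq_tailSum (X Y : ℕ → Ω → ℝ) (w : ℕ → ℝ) (m : ℕ) (ω : Ω) :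
    ∑ t ∈ Finset.Icc 1 m, (X (t + 1) ω * Y 1 ω + X 1 ω * Y (t + 1) ω) * w t
      = Y 1 ω * tailSum X w m ω + X 1 ω * tailSum Y w m ω := by
  simp only [tailSum, Finset.mul_sum, ← Finset.sum_add_distrib]
  exact Finset.sum_congr rfl fun _ _ => by ring

variable [MeasurableSpace Ω] {μ : Measure Ω} {X : ℕ → Ω → ℝ} {m : ℕ}

lemma memLp_tailSum (w : ℕ → ℝ) (hX : ∀ t ∈ Finset.Icc 1 m, MemLp (X (t + 1)) 2 μ) :
    MemLp (tailSum X w m) 2 μ :=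
  memLp_finsetSum _ fun t ht => (hX t ht).mul_const _

lemma integral_sq_tailSum [IsFiniteMeasure μ] (w : ℕ → ℝ)
    (hL2 : ∀ t ∈ Finset.Icc 1 m, MemLp (X (t + 1)) 2 μ)
    (hmean : ∀ t ∈ Finset.Icc 1 m, ∫ ω, X (t + 1) ω ∂μ = 0)
    (hind : Set.Pairwise ↑(Finset.Icc 1 m) fun t t' => X (t + 1) ⟂ᵢ[μ] X (t' + 1)) :
    ∫ ω, tailSum X w m ω ^ 2 ∂μ
      = ∑ t ∈ Finset.Icc 1 m, (∫ ω, X (t + 1) ω ^ 2 ∂μ) * w t ^ 2 := by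
  unfold tailSum
  rw [integral_sq_sum_of_pairwise_indepFun (fun t ht => (hL2 t ht).mul_const _)
    (fun t ht => by rw [integral_mul_const, hmean t ht, zero_mul])
    (fun t ht t' ht' h => (hind ht ht' h).comp (measurable_mul_const _) (measurable_mul_const _))]
  simp_rw [mul_pow, integral_mul_const]

end TailSum

lemma add_one_mem_Icc_two {t T : ℕ} (ht : t ∈ Finset.Icc 1 (T - 1)) : t + 1 ∈ Finset.Icc 2 T := by
  simp only [Finset.mem_Icc] at ht ⊢
  omega

lemma add_one_mem_Icc_one {t T : ℕ} (ht : t ∈ Finset.Icc 1 (T - 1)) : t + 1 ∈ Finset.Icc 1 T :=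
  Finset.Icc_subset_Icc_left one_le_two (add_one_mem_Icc_two ht)

section Model

variable {Ω : Type*} {T : ℕ} {R S : ℕ → Ω → ℝ}

abbrev coordSigma (R S : ℕ → Ω → ℝ) (I J : Set ℕ) : MeasurableSpace Ω :=
  (⨆ t ∈ I, MeasurableSpace.comap (R t) inferInstance)
    ⊔ ⨆ t ∈ J, MeasurableSpace.comap (S t) inferInstance

lemma coordSigma_eq_iSup (R S : ℕ → Ω → ℝ) (I J : Set ℕ) :
    coordSigma R S I J = ⨆ k ∈ Sum.inl '' I ∪ Sum.inr '' J,
      MeasurableSpace.comap (Sum.elim R S k) inferInstance := by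
  rw [_root_.iSup_union, iSup_image, iSup_image]
  rfl

lemma measurable_coordSigma_left {I J : Set ℕ} {t : ℕ} (ht : t ∈ I) :
    Measurable[coordSigma R S I J] (R t) :=
  (comap_measurable (R t)).mono (le_sup_of_le_left
    (le_iSup₂ (f := fun t (_ : t ∈ I) => MeasurableSpace.comap (R t) inferInstance) t ht)) le_rfl

lemma measurable_coordSigma_right {I J : Set ℕ} {t : ℕ} (ht : t ∈ J) :
    Measurable[coordSigma R S I J] (S t) :=
  (comap_measurable (S t)).mono (le_sup_of_le_right
    (le_iSup₂ (f := fun t (_ : t ∈ J) => MeasurableSpace.comap (S t) inferInstance) t ht)) le_rfl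

lemma measurable_tailSum_coordSigma_left {J : Set ℕ} (w : ℕ → ℝ) :
    Measurable[coordSigma R S (Set.Icc 2 T) J] (tailSum R w (T - 1)) :=
  measurable_tailSum w fun _ ht => measurable_coordSigma_left
    (Finset.mem_Icc.1 (add_one_mem_Icc_two ht))

lemma measurable_tailSum_coordSigma_right {I : Set ℕ} (w : ℕ → ℝ) :
    Measurable[coordSigma R S I (Set.Icc 2 T)] (tailSum S w (T - 1)) :=
  measurable_tailSum w fun _ ht => measurable_coordSigma_right
    (Finset.mem_Icc.1 (add_one_mem_Icc_two ht))

variable [MeasurableSpace Ω] {μ : Measure Ω}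

section TailMoments

variable [IsFiniteMeasure μ]
    (hL2 : ∀ t ∈ Finset.Icc 1 T, MemLp (R t) 2 μ ∧ MemLp (S t) 2 μ)
    (hindep : iIndepFun
      (Sum.elim (fun j : Fin T => R ((j : ℕ) + 1)) (fun j : Fin T => S ((j : ℕ) + 1))) μ)
    (hmean : ∀ t ∈ Finset.Icc 1 T, (∫ ω, R t ω ∂μ) = 0 ∧ (∫ ω, S t ω ∂μ) = 0)
    (hvar : ∀ t ∈ Finset.Icc 2 T, (∫ ω, (R t ω) ^ 2 ∂μ) = 1 ∧ (∫ ω, (S t ω) ^ 2 ∂μ) = 1)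
include hL2 hindep hmean hvar

lemma integral_sq_tailSum_left (w : ℕ → ℝ) :
    ∫ ω, tailSum R w (T - 1) ω ^ 2 ∂μ = ∑ t ∈ Finset.Icc 1 (T - 1), w t ^ 2 := by
  rw [integral_sq_tailSum w (fun t ht => (hL2 _ (add_one_mem_Icc_one ht)).1)
    (fun t ht => (hmean _ (add_one_mem_Icc_one ht)).1)]
  · exact Finset.sum_congr rfl fun t ht => by rw [(hvar _ (add_one_mem_Icc_two ht)).1, one_mul]
  · intro t ht t' ht' hne
    simp only [Finset.coe_Icc, Set.mem_Icc] at ht ht'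
    exact hindep.indepFun (i := Sum.inl ⟨t, by omega⟩) (j := Sum.inl ⟨t', by omega⟩)
      (by simpa using hne)

lemma integral_sq_tailSum_right (w : ℕ → ℝ) :
    ∫ ω, tailSum S w (T - 1) ω ^ 2 ∂μ = ∑ t ∈ Finset.Icc 1 (T - 1), w t ^ 2 := by
  rw [integral_sq_tailSum w (fun t ht => (hL2 _ (add_one_mem_Icc_one ht)).2)
    (fun t ht => (hmean _ (add_one_mem_Icc_one ht)).2)]
  · exact Finset.sum_congr rfl fun t ht => by rw [(hvar _ (add_one_mem_Icc_two ht)).2, one_mul]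
  · intro t ht t' ht' hne
    simp only [Finset.coe_Icc, Set.mem_Icc] at ht ht'
    exact hindep.indepFun (i := Sum.inr ⟨t, by omega⟩) (j := Sum.inr ⟨t', by omega⟩)
      (by simpa using hne)

end TailMoments

variable (hmeas : ∀ t ∈ Finset.Icc 1 T, Measurable (R t) ∧ Measurable (S t))
    (hindep : iIndepFun
      (Sum.elim (fun j : Fin T => R ((j : ℕ) + 1)) (fun j : Fin T => S ((j : ℕ) + 1))) μ)
include hmeas hindep

lemma indepFun_of_measurable_coordSigma {I J I' J' : Set ℕ} (hI : I ⊆ Set.Icc 1 T)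
    (hJ : J ⊆ Set.Icc 1 T) (hI' : I' ⊆ Set.Icc 1 T) (hJ' : J' ⊆ Set.Icc 1 T)
    (hII' : Disjoint I I') (hJJ' : Disjoint J J') {F G : Ω → ℝ}
    (hF : Measurable[coordSigma R S I J] F) (hG : Measurable[coordSigma R S I' J'] G) :
    F ⟂ᵢ[μ] G := by
  set e := Sum.map (fun j : Fin T => (j : ℕ) + 1) (fun j : Fin T => (j : ℕ) + 1)
  have hrange : ∀ {I J : Set ℕ}, I ⊆ Set.Icc 1 T → J ⊆ Set.Icc 1 T →
      Sum.inl '' I ∪ Sum.inr '' J ⊆ Set.range e := by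
    rintro I J hI hJ _ (⟨t, ht, rfl⟩ | ⟨t, ht, rfl⟩)
    · obtain ⟨h1, hle⟩ := hI ht
      exact ⟨Sum.inl ⟨t - 1, by omega⟩, by simp [e]; omega⟩
    · obtain ⟨h1, hle⟩ := hJ ht
      exact ⟨Sum.inr ⟨t - 1, by omega⟩, by simp [e]; omega⟩
  have hmeas' : ∀ i, Measurable (Sum.elim R S (e i)) := by
    rintro (j | j)
    · exact (hmeas (j + 1) (by simp)).1
    · exact (hmeas (j + 1) (by simp)).2
  have hindep' : iIndepFun (Sum.elim R S ∘ e) μ := by rwa [Sum.elim_comp_map]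
  rw [coordSigma_eq_iSup] at hF hG
  refine hindep'.indepFun_of_measurable_iSup_comap hmeas' (hrange hI hJ) (hrange hI' hJ') ?_ hF hG
  simp only [Set.disjoint_union_left, Set.disjoint_union_right,
    Set.disjoint_image_iff Sum.inl_injective, Set.disjoint_image_iff Sum.inr_injective]
  exact ⟨⟨hII', Set.disjoint_image_inl_image_inr.symm⟩, Set.disjoint_image_inl_image_inr, hJJ'⟩

lemma indepFun_tailSum_tailSum (v w : ℕ → ℝ) :
    tailSum R v (T - 1) ⟂ᵢ[μ] tailSum S w (T - 1) :=
  indepFun_of_measurable_coordSigma hmeas hindep (Set.Icc_subset_Icc_left one_le_two)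
    (Set.empty_subset _) (Set.empty_subset _) (Set.Icc_subset_Icc_left one_le_two)
    disjoint_bot_right disjoint_bot_left
    (measurable_tailSum_coordSigma_left v) (measurable_tailSum_coordSigma_right w)

section

variable (hT : 1 ≤ T)
include hT

lemma indepFun_S_one_tailSum (w : ℕ → ℝ) : S 1 ⟂ᵢ[μ] tailSum R w (T - 1) :=
  indepFun_of_measurable_coordSigma hmeas hindep (Set.empty_subset _)
    (Set.singleton_subset_iff.2 ⟨le_rfl, hT⟩) (Set.Icc_subset_Icc_left one_le_two)
    (Set.empty_subset _) disjoint_bot_left disjoint_bot_right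
    (measurable_coordSigma_right rfl) (measurable_tailSum_coordSigma_left w)

lemma indepFun_R_one_tailSum (w : ℕ → ℝ) : R 1 ⟂ᵢ[μ] tailSum S w (T - 1) :=
  indepFun_of_measurable_coordSigma hmeas hindep (Set.singleton_subset_iff.2 ⟨le_rfl, hT⟩)
    (Set.empty_subset _) (Set.empty_subset _) (Set.Icc_subset_Icc_left one_le_two)
    disjoint_bot_right disjoint_bot_left
    (measurable_coordSigma_left rfl) (measurable_tailSum_coordSigma_right w)

lemma indepFun_R_one_S_one : R 1 ⟂ᵢ[μ] S 1 :=
  indepFun_of_measurable_coordSigma hmeas hindep (Set.singleton_subset_iff.2 ⟨le_rfl, hT⟩)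
    (Set.empty_subset _) (Set.empty_subset _) (Set.singleton_subset_iff.2 ⟨le_rfl, hT⟩)
    disjoint_bot_right disjoint_bot_left
    (measurable_coordSigma_left rfl) (measurable_coordSigma_right rfl)

lemma indepFun_S_one_mul_tailSum_R_one_mul_tailSum (v w : ℕ → ℝ) :
    (fun ω => S 1 ω * tailSum R v (T - 1) ω) ⟂ᵢ[μ] fun ω => R 1 ω * tailSum S w (T - 1) ω := by
  have hF : Measurable[coordSigma R S (Set.Icc 2 T) {1}] fun ω => S 1 ω * tailSum R v (T - 1) ω :=
    (measurable_coordSigma_right (Set.mem_singleton 1)).mul (measurable_tailSum_coordSigma_left v)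
  have hG : Measurable[coordSigma R S {1} (Set.Icc 2 T)] fun ω => R 1 ω * tailSum S w (T - 1) ω :=
    (measurable_coordSigma_left (Set.mem_singleton 1)).mul (measurable_tailSum_coordSigma_right w)
  exact indepFun_of_measurable_coordSigma hmeas hindep (Set.Icc_subset_Icc_left one_le_two)
    (Set.singleton_subset_iff.2 ⟨le_rfl, hT⟩) (Set.singleton_subset_iff.2 ⟨le_rfl, hT⟩)
    (Set.Icc_subset_Icc_left one_le_two) (Set.disjoint_singleton_right.2 (by simp))
    (Set.disjoint_singleton_left.2 (by simp)) hF hG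

end

variable (hL2 : ∀ t ∈ Finset.Icc 1 T, MemLp (R t) 2 μ ∧ MemLp (S t) 2 μ)
include hL2

lemma memLp_tailSum_mul_tailSum (v w : ℕ → ℝ) :
    MemLp (fun ω => tailSum R v (T - 1) ω * tailSum S w (T - 1) ω) 2 μ :=
  (indepFun_tailSum_tailSum hmeas hindep v w).memLp_two_mul
    (memLp_tailSum v fun _ ht => (hL2 _ (add_one_mem_Icc_one ht)).1)
    (memLp_tailSum w fun _ ht => (hL2 _ (add_one_mem_Icc_one ht)).2)

variable (hT : 1 ≤ T)
include hT

lemma memLp_cross_term (w : ℕ → ℝ) :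
    MemLp (fun ω => ∑ t ∈ Finset.Icc 1 (T - 1),
      (R (t + 1) ω * S 1 ω + R 1 ω * S (t + 1) ω) * w t) 2 μ := by
  have h1 := hL2 1 (Finset.left_mem_Icc.2 hT)
  simp_rw [sum_mul_add_mul_eq_tailSum]
  exact ((indepFun_S_one_tailSum hmeas hindep hT w).memLp_two_mul h1.2
      (memLp_tailSum w fun _ ht => (hL2 _ (add_one_mem_Icc_one ht)).1)).add
    ((indepFun_R_one_tailSum hmeas hindep hT w).memLp_two_mul h1.1
      (memLp_tailSum w fun _ ht => (hL2 _ (add_one_mem_Icc_one ht)).2))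

lemma memLp_R_one_mul_S_one_mul_const (c : ℝ) : MemLp (fun ω => R 1 ω * S 1 ω * c) 2 μ :=
  ((indepFun_R_one_S_one hmeas hindep hT).memLp_two_mul (hL2 1 (Finset.left_mem_Icc.2 hT)).1
    (hL2 1 (Finset.left_mem_Icc.2 hT)).2).mul_const c

lemma integral_sq_R_one_mul_S_one_mul_const {σ : ℝ}
    (hvar1 : (∫ ω, (R 1 ω) ^ 2 ∂μ) = σ ^ 2 ∧ (∫ ω, (S 1 ω) ^ 2 ∂μ) = σ ^ 2) (c : ℝ) :
    ∫ ω, (R 1 ω * S 1 ω * c) ^ 2 ∂μ = σ ^ 4 * c ^ 2 := by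
  have h1 := hL2 1 (Finset.left_mem_Icc.2 hT)
  rw [integral_mul_const_sq, (indepFun_R_one_S_one hmeas hindep hT).integral_mul_sq h1.1.1 h1.2.1,
    hvar1.1, hvar1.2]
  ring

variable [IsFiniteMeasure μ]
    (hmean : ∀ t ∈ Finset.Icc 1 T, (∫ ω, R t ω ∂μ) = 0 ∧ (∫ ω, S t ω ∂μ) = 0)
    (hvar : ∀ t ∈ Finset.Icc 2 T, (∫ ω, (R t ω) ^ 2 ∂μ) = 1 ∧ (∫ ω, (S t ω) ^ 2 ∂μ) = 1)
include hmean hvar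

lemma integral_sq_tailSum_mul_tailSum (x : ℝ) :
    ∫ ω, ((∑ t ∈ Finset.Icc 1 (T - 1), R (t + 1) ω * x ^ t)
        * ∑ t ∈ Finset.Icc 1 (T - 1), S (t + 1) ω * x ^ t) ^ 2 ∂μ
      = ∑ t ∈ Finset.Icc 2 T, ((t : ℝ) - 1) * x ^ (2 * t)
        + ∑ t ∈ Finset.Icc (T + 1) (2 * T - 2), (2 * (T : ℝ) - 1 - t) * x ^ (2 * t) := by
  change ∫ ω, (tailSum R (x ^ ·) (T - 1) ω * tailSum S (x ^ ·) (T - 1) ω) ^ 2 ∂μ = _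
  rw [(indepFun_tailSum_tailSum hmeas hindep _ _).integral_mul_sq
    (memLp_tailSum _ fun _ ht => (hL2 _ (add_one_mem_Icc_one ht)).1).1
    (memLp_tailSum _ fun _ ht => (hL2 _ (add_one_mem_Icc_one ht)).2).1,
    integral_sq_tailSum_left hL2 hindep hmean hvar,
    integral_sq_tailSum_right hL2 hindep hmean hvar, ← sq]
  have h := Finset.sq_sum_Icc_pow (x ^ 2) (T - 1)
  rw [show T - 1 + 1 = T by omega, show T - 1 + 2 = T + 1 by omega,
    show 2 * (T - 1) = 2 * T - 2 by omega, Nat.cast_sub hT] at h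
  simp_rw [← pow_mul, mul_comm _ 2] at h ⊢
  rw [h]
  congr 1
  exact Finset.sum_congr rfl fun t _ => by push_cast; ring

lemma integral_sq_cross_term {σ : ℝ}
    (hvar1 : (∫ ω, (R 1 ω) ^ 2 ∂μ) = σ ^ 2 ∧ (∫ ω, (S 1 ω) ^ 2 ∂μ) = σ ^ 2) (w : ℕ → ℝ) :
    ∫ ω, (∑ t ∈ Finset.Icc 1 (T - 1), (R (t + 1) ω * S 1 ω + R 1 ω * S (t + 1) ω) * w t) ^ 2 ∂μ
      = 2 * σ ^ 2 * ∑ t ∈ Finset.Icc 1 (T - 1), w t ^ 2 := by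
  have h1 := hL2 1 (Finset.left_mem_Icc.2 hT)
  have hR := memLp_tailSum w fun _ ht => (hL2 _ (add_one_mem_Icc_one ht)).1
  have hS := memLp_tailSum w fun _ ht => (hL2 _ (add_one_mem_Icc_one ht)).2
  have hSR := indepFun_S_one_tailSum hmeas hindep hT w
  have hRS := indepFun_R_one_tailSum hmeas hindep hT w
  have horth :
      ∫ ω, (S 1 ω * tailSum R w (T - 1) ω) * (R 1 ω * tailSum S w (T - 1) ω) ∂μ = 0 := by
    have hprod := indepFun_S_one_mul_tailSum_R_one_mul_tailSum hmeas hindep hT w w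
    rw [hprod.integral_fun_mul_eq_mul_integral (hSR.memLp_two_mul h1.2 hR).1
        (hRS.memLp_two_mul h1.1 hS).1,
      hSR.integral_fun_mul_eq_mul_integral h1.2.1 hR.1, (hmean 1 (Finset.left_mem_Icc.2 hT)).2,
      zero_mul, zero_mul]
  simp_rw [sum_mul_add_mul_eq_tailSum]
  rw [integral_add_sq_of_integral_mul_eq_zero (hSR.memLp_two_mul h1.2 hR)
    (hRS.memLp_two_mul h1.1 hS) horth, hSR.integral_mul_sq h1.2.1 hR.1,
    hRS.integral_mul_sq h1.1.1 hS.1, hvar1.1, hvar1.2,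
    integral_sq_tailSum_left hL2 hindep hmean hvar,
    integral_sq_tailSum_right hL2 hindep hmean hvar]
  ring

end Model

theorem perturbation_tail_bound_general {Ω : Type*} [MeasurableSpace Ω]
    (μ : Measure Ω) [IsProbabilityMeasure μ]
    (T : ℕ) (hT : 2 ≤ T) (σ x : ℝ)
    (R S : ℕ → Ω → ℝ)
    (hmeas : ∀ t ∈ Finset.Icc 1 T, Measurable (R t) ∧ Measurable (S t))
    (hL2 : ∀ t ∈ Finset.Icc 1 T, MemLp (R t) 2 μ ∧ MemLp (S t) 2 μ)
    (hindep : iIndepFun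
      (Sum.elim (fun j : Fin T => R ((j : ℕ) + 1)) (fun j : Fin T => S ((j : ℕ) + 1))) μ)
    (hmean : ∀ t ∈ Finset.Icc 1 T, (∫ ω, R t ω ∂μ) = 0 ∧ (∫ ω, S t ω ∂μ) = 0)
    (hvar1 : (∫ ω, (R 1 ω) ^ 2 ∂μ) = σ ^ 2 ∧ (∫ ω, (S 1 ω) ^ 2 ∂μ) = σ ^ 2)
    (hvar : ∀ t ∈ Finset.Icc 2 T, (∫ ω, (R t ω) ^ 2 ∂μ) = 1 ∧ (∫ ω, (S t ω) ^ 2 ∂μ) = 1)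
    (r s u : Ω → ℝ)
    (hr : r = fun ω => (∑ t ∈ Finset.Icc 1 (T - 1), R (t + 1) ω * x ^ t) *
                       (∑ t ∈ Finset.Icc 1 (T - 1), S (t + 1) ω * x ^ t))
    (hs : s = fun ω => ∑ t ∈ Finset.Icc 1 (T - 1),
              (R (t + 1) ω * S 1 ω + R 1 ω * S (t + 1) ω) * x ^ (T + t))
    (hu : u = fun ω => R 1 ω * S 1 ω * x ^ (2 * T))
    (β n : ℝ) (hn : 1 ≤ n) :
    (μ {ω | n ^ β ≤ |r ω + s ω * n ^ (-(1 : ℝ) / 2) + u ω * n ^ (-(1 : ℝ))|}).toReal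
      ≤ 9 * n ^ (-(2 * β)) *
        ((∑ t ∈ Finset.Icc 2 T, ((t : ℝ) - 1) * x ^ (2 * t))
          + (∑ t ∈ Finset.Icc (T + 1) (2 * T - 2),
              (2 * (T : ℝ) - 1 - (t : ℝ)) * x ^ (2 * t))
          + n ^ (-(1 : ℝ)) * (2 * σ ^ 2 * ∑ t ∈ Finset.Icc 1 (T - 1), x ^ (2 * (T + t)))
          + n ^ (-(2 : ℝ)) * (σ ^ 4 * x ^ (4 * T))) := by
  have hT1 : 1 ≤ T := by omega
  have hn0 : 0 < n := by linarith
  have hrL2 : MemLp r 2 μ := hr ▸ memLp_tailSum_mul_tailSum hmeas hindep hL2 _ _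
  have hsL2 : MemLp s 2 μ := hs ▸ memLp_cross_term hmeas hindep hL2 hT1 _
  have huL2 : MemLp u 2 μ := hu ▸ memLp_R_one_mul_S_one_mul_const hmeas hindep hL2 hT1 _
  have hhalf : (n ^ (-(1 : ℝ) / 2)) ^ 2 = n ^ (-(1 : ℝ)) := by
    rw [← Real.rpow_natCast, ← Real.rpow_mul hn0.le]; norm_num
  have hone : (n ^ (-(1 : ℝ))) ^ 2 = n ^ (-(2 : ℝ)) := by
    rw [← Real.rpow_natCast, ← Real.rpow_mul hn0.le]; norm_num
  have hscale : 3 / (n ^ β) ^ 2 ≤ 9 * n ^ (-(2 * β)) := by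
    rw [mul_comm 2, Real.rpow_neg hn0.le, Real.rpow_mul hn0.le, Real.rpow_two, div_eq_mul_inv]
    gcongr
    norm_num
  calc μ.real {ω | n ^ β ≤ |r ω + s ω * n ^ (-(1 : ℝ) / 2) + u ω * n ^ (-(1 : ℝ))|}
      ≤ 3 / (n ^ β) ^ 2 * (∫ ω, r ω ^ 2 ∂μ + (n ^ (-(1 : ℝ) / 2)) ^ 2 * ∫ ω, s ω ^ 2 ∂μ
          + (n ^ (-(1 : ℝ))) ^ 2 * ∫ ω, u ω ^ 2 ∂μ) :=
        measureReal_abs_add_mul_add_mul_ge_le hrL2 hsL2 huL2 _ _ (by positivity)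
    _ ≤ 9 * n ^ (-(2 * β)) * (∫ ω, r ω ^ 2 ∂μ + (n ^ (-(1 : ℝ) / 2)) ^ 2 * ∫ ω, s ω ^ 2 ∂μ
          + (n ^ (-(1 : ℝ))) ^ 2 * ∫ ω, u ω ^ 2 ∂μ) := by gcongr
    _ = _ := by
        simp only [hr, hs, hu, integral_sq_tailSum_mul_tailSum hmeas hindep hL2 hT1 hmean hvar,
          integral_sq_cross_term hmeas hindep hL2 hT1 hmean hvar hvar1,
          integral_sq_R_one_mul_S_one_mul_const hmeas hindep hL2 hT1 hvar1]
        rw [hhalf, hone]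
        congr 2
        · simp_rw [← pow_mul, mul_comm _ 2]
        · ring

/-- Tail bound for the perturbation term
`r + s n^{-1/2} + u n^{-1}`: for all `β > 0` and real `n ≥ 1`,
`P(|r + s n^{-1/2} + u n^{-1}| ≥ n^β) ≤ 9 n^{-2β} [∑_{t=2}^{T} (t-1) x^{2t}
+ ∑_{t=T+1}^{2T-2} (2T-1-t) x^{2t} + n^{-1}·2σ² ∑_{t=1}^{T-1} x^{2(T+t)}
+ n^{-2}·σ⁴ x^{4T}]`. -/
theorem perturbation_tail_bound {Ω : Type*} [MeasurableSpace Ω]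
    (μ : Measure Ω) [IsProbabilityMeasure μ]
    (T : ℕ) (hT : 2 ≤ T) (σ x : ℝ)
    (R S : ℕ → Ω → ℝ)
    (hmeas : ∀ t ∈ Finset.Icc 1 T, Measurable (R t) ∧ Measurable (S t))
    (hL2 : ∀ t ∈ Finset.Icc 1 T, MemLp (R t) 2 μ ∧ MemLp (S t) 2 μ)
    (hindep : iIndepFun
      (Sum.elim (fun j : Fin T => R ((j : ℕ) + 1)) (fun j : Fin T => S ((j : ℕ) + 1))) μ)
    (hmean : ∀ t ∈ Finset.Icc 1 T, (∫ ω, R t ω ∂μ) = 0 ∧ (∫ ω, S t ω ∂μ) = 0)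
    (hvar1 : (∫ ω, (R 1 ω) ^ 2 ∂μ) = σ ^ 2 ∧ (∫ ω, (S 1 ω) ^ 2 ∂μ) = σ ^ 2)
    (hvar : ∀ t ∈ Finset.Icc 2 T, (∫ ω, (R t ω) ^ 2 ∂μ) = 1 ∧ (∫ ω, (S t ω) ^ 2 ∂μ) = 1)
    (r s u : Ω → ℝ)
    (hr : r = fun ω => (∑ t ∈ Finset.Icc 1 (T - 1), R (t + 1) ω * x ^ t) *
                       (∑ t ∈ Finset.Icc 1 (T - 1), S (t + 1) ω * x ^ t))
    (hs : s = fun ω => ∑ t ∈ Finset.Icc 1 (T - 1),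
              (R (t + 1) ω * S 1 ω + R 1 ω * S (t + 1) ω) * x ^ (T + t))
    (hu : u = fun ω => R 1 ω * S 1 ω * x ^ (2 * T))
    (β n : ℝ) (hβ : 0 < β) (hn : 1 ≤ n) :
    (μ {ω | n ^ β ≤ |r ω + s ω * n ^ (-(1 : ℝ) / 2) + u ω * n ^ (-(1 : ℝ))|}).toReal
      ≤ 9 * n ^ (-(2 * β)) *
        ((∑ t ∈ Finset.Icc 2 T, ((t : ℝ) - 1) * x ^ (2 * t))
          + (∑ t ∈ Finset.Icc (T + 1) (2 * T - 2),
              (2 * (T : ℝ) - 1 - (t : ℝ)) * x ^ (2 * t))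
          + n ^ (-(1 : ℝ)) * (2 * σ ^ 2 * ∑ t ∈ Finset.Icc 1 (T - 1), x ^ (2 * (T + t)))
          + n ^ (-(2 : ℝ)) * (σ ^ 4 * x ^ (4 * T))) :=
  perturbation_tail_bound_general μ T hT σ x R S hmeas hL2 hindep hmean hvar1 hvar r s u hr hs hu β
    n hn
end

section
/- Let η > 0 and σ > 0 be real numbers, and define f(x) = (η + σ^2 x)^2 and g(x) = σ^2 x (2η + σ^2 x). Then, as c → 1 with c ≠ 1, the ratio (f(1)·f(c^2) − f(c)^2) / (g(1)·g(c^2) − g(c)^2) tends to (η + σ^2)^2 / σ^4 = 1 + 2η/σ^2 + η^2/σ^4. -/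
open Filter Topology

/-! Both determinants carry the factor `(c - 1)²`; after cancelling it the ratio is continuous at
`c = 1`, so the limit is its value there. -/

/-- The determinant of the covariance matrix `[[h 1, h c], [h c, h (c²)]]`. -/
def momentDet (h : ℝ → ℝ) (c : ℝ) : ℝ := h 1 * h (c ^ 2) - h c ^ 2

lemma momentDet_sq_affine (η a c : ℝ) :
    momentDet (fun x => (η + a * x) ^ 2) c =
      (c - 1) ^ 2 * (η * a * ((η + a) * (η + a * c ^ 2) + (η + a * c) ^ 2)) := by
  unfold momentDet
  ring

lemma momentDet_linear_mul_affine (η a c : ℝ) :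
    momentDet (fun x => a * x * (2 * η + a * x)) c = (c - 1) ^ 2 * (2 * η * a ^ 3 * c ^ 2) := by
  unfold momentDet
  ring

lemma tendsto_pow_sub_mul_div_pow_sub_mul {P Q : ℝ → ℝ} {x : ℝ} (n : ℕ)
    (hP : ContinuousAt P x) (hQ : ContinuousAt Q x) (hQx : Q x ≠ 0) :
    Tendsto (fun c => (c - x) ^ n * P c / ((c - x) ^ n * Q c)) (𝓝[≠] x) (𝓝 (P x / Q x)) := by
  have hcancel : (fun c => P c / Q c) =ᶠ[𝓝[≠] x] fun c => (c - x) ^ n * P c / ((c - x) ^ n * Q c) := by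
    filter_upwards [self_mem_nhdsWithin] with c hc
    exact (mul_div_mul_left _ _ (pow_ne_zero n (sub_ne_zero.mpr hc))).symm
  exact ((hP.div hQ hQx).tendsto.mono_left nhdsWithin_le_nhds).congr' hcancel

lemma tendsto_momentDet_div_momentDet {η a : ℝ} (hη : η ≠ 0) (ha : a ≠ 0) :
    Tendsto
      (fun c => momentDet (fun x => (η + a * x) ^ 2) c /
        momentDet (fun x => a * x * (2 * η + a * x)) c)
      (𝓝[≠] 1) (𝓝 ((η + a) ^ 2 / a ^ 2)) := by
  have hlim := tendsto_pow_sub_mul_div_pow_sub_mul 2 (x := 1)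
    (P := fun c => η * a * ((η + a) * (η + a * c ^ 2) + (η + a * c) ^ 2))
    (Q := fun c => 2 * η * a ^ 3 * c ^ 2) (by fun_prop) (by fun_prop) (by simp [hη, ha])
  simp only [momentDet_sq_affine, momentDet_linear_mul_affine]
  convert hlim using 2
  field_simp
  ring

/-- With `f(x) = (η + σ²x)²` and `g(x) = σ²x(2η + σ²x)`, the ratio
`(f(1)f(c²) − f(c)²) / (g(1)g(c²) − g(c)²)` tends to
`(η + σ²)²/σ⁴ = 1 + 2η/σ² + η²/σ⁴` as `c → 1`, `c ≠ 1`. -/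
theorem snr_determinant_ratio_limit (η σ : ℝ) (hη : 0 < η) (hσ : 0 < σ)
    (f g : ℝ → ℝ)
    (hf : f = fun x => (η + σ ^ 2 * x) ^ 2)
    (hg : g = fun x => σ ^ 2 * x * (2 * η + σ ^ 2 * x)) :
    Tendsto (fun c : ℝ =>
        (f 1 * f (c ^ 2) - (f c) ^ 2) / (g 1 * g (c ^ 2) - (g c) ^ 2))
      (nhdsWithin 1 {(1 : ℝ)}ᶜ)
      (nhds ((η + σ ^ 2) ^ 2 / σ ^ 4))
    ∧ (η + σ ^ 2) ^ 2 / σ ^ 4 = 1 + 2 * η / σ ^ 2 + η ^ 2 / σ ^ 4 := by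
  subst hf hg
  have hσ4 : σ ^ 4 = (σ ^ 2) ^ 2 := by ring
  refine ⟨?_, by field_simp; ring⟩
  rw [hσ4]
  exact tendsto_momentDet_div_momentDet hη.ne' (by positivity)
end

section
/- Let (Ω, P) be a probability space, let X be a real random variable with E[X] = 0 and E[X^2] = λ^2 > 0, let N = (N_1, ..., N_m) be a vector of square-integrable real random variables with E[N_i] = 0 for all i, such that X is independent of the vector N, and let ν ∈ ℝ^m. Define X̃ = νX + N (componentwise X̃_i = ν_i X + N_i). Let K_2 be the m×m covariance matrix of N and K_1 = K_2 + λ^2 νν^T the covariance matrix of X̃, and assume K_2 is positive definite. Then inf_{w ∈ ℝ^m} E[(w^T X̃ − X)^2] = λ^2 / (1 + SNR_a), where SNR_a = det(K_1)/det(K_2) − 1; moreover this infimum is attained by some w* ∈ ℝ^m. -/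
/-!
Independence and `E[X] = 0` make `X` orthogonal to every linear combination `wᵀN`, so the
mean-square error of `w` is `λ²(wᵀν - 1)² + wᵀK₂w = wᵀK₁w - 2λ²wᵀν + λ²`. Since `K₁` is positive
semidefinite, completing the square shows that this quadratic is minimised at any `w*` with
`K₁w* = λ²ν`, with value `λ² - λ²w*ᵀν`. With `s = νᵀK₂⁻¹ν` one has `K₁K₂⁻¹ν = (1 + λ²s)ν`, so
`w* = λ²/(1 + λ²s) · K₂⁻¹ν` and the minimum is `λ²/(1 + λ²s)`; by the matrix determinant lemma
`det K₁ / det K₂ = 1 + λ²s`, i.e. `SNR_a = λ²s`.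
-/

open MeasureTheory ProbabilityTheory Matrix

namespace Matrix

variable {n : Type*} [Fintype n]

theorem det_add_vecMulVec [DecidableEq n] {R : Type*} [CommRing R] {A : Matrix n n R}
    (hA : IsUnit A.det) (u v : n → R) : (A + vecMulVec u v).det = A.det * (1 + v ⬝ᵥ A⁻¹ *ᵥ u) := by
  rw [vecMulVec_eq Unit, det_add_replicateCol_mul_replicateRow hA,
    det_unique (1 + _ : Matrix Unit Unit R), Matrix.mul_assoc]
  rfl

theorem PosSemidef.isLeast_range_dotProduct_mulVec_sub {A : Matrix n n ℝ} (hA : A.PosSemidef)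
    {x₀ b : n → ℝ} (hx₀ : A *ᵥ x₀ = b) (c : ℝ) :
    IsLeast (Set.range fun x => x ⬝ᵥ A *ᵥ x - 2 * (x ⬝ᵥ b) + c) (c - x₀ ⬝ᵥ b) := by
  have hsymm : ∀ x, x₀ ⬝ᵥ A *ᵥ x = x ⬝ᵥ b := by
    intro x
    rw [dotProduct_mulVec, ← hx₀, dotProduct_comm, ← vecMul_transpose,
      ← conjTranspose_eq_transpose_of_trivial, hA.1]
  have hsq : ∀ x, x ⬝ᵥ A *ᵥ x - 2 * (x ⬝ᵥ b) = (x - x₀) ⬝ᵥ A *ᵥ (x - x₀) - x₀ ⬝ᵥ b := by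
    intro x
    simp only [mulVec_sub, dotProduct_sub, sub_dotProduct, hsymm, hx₀]
    ring
  refine ⟨⟨x₀, by simp only [hsq, sub_self, mulVec_zero, dotProduct_zero]; ring⟩, ?_⟩
  rintro _ ⟨x, rfl⟩
  have := hA.dotProduct_mulVec_nonneg (x - x₀)
  simp only [star_trivial] at this
  linarith [hsq x]

theorem PosDef.isLeast_range_dotProduct_mulVec_add_mul_sq [DecidableEq n] {K : Matrix n n ℝ}
    (hK : K.PosDef) {c : ℝ} (hc : 0 ≤ c) (ν : n → ℝ) :
    IsLeast (Set.range fun w => w ⬝ᵥ K *ᵥ w + c * (w ⬝ᵥ ν - 1) ^ 2)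
      (c / (1 + c * (ν ⬝ᵥ K⁻¹ *ᵥ ν))) := by
  have hdet : IsUnit K.det := (isUnit_iff_isUnit_det _).mp hK.isUnit
  set s := ν ⬝ᵥ K⁻¹ *ᵥ ν with hs_def
  have hgain : 0 < 1 + c * s := add_pos_of_pos_of_nonneg one_pos
    (mul_nonneg hc (by simpa using hK.inv.posSemidef.dotProduct_mulVec_nonneg ν))
  set A := K + c • vecMulVec ν ν with hA_def
  have hA : A.PosSemidef := hK.posSemidef.add ((posSemidef_vecMulVec_self_star ν).smul hc)
  have hAu : A *ᵥ K⁻¹ *ᵥ ν = (1 + c * s) • ν := by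
    rw [add_mulVec, mulVec_mulVec, mul_nonsing_inv _ hdet, one_mulVec, smul_mulVec,
      vecMulVec_mulVec, op_smul_eq_smul, smul_smul, add_smul, one_smul]
  have hopt : A *ᵥ ((c / (1 + c * s)) • K⁻¹ *ᵥ ν) = c • ν := by
    rw [mulVec_smul, hAu, smul_smul, div_mul_cancel₀ _ hgain.ne']
  convert hA.isLeast_range_dotProduct_mulVec_sub hopt c using 1
  · congr 1
    funext w
    rw [hA_def, add_mulVec, dotProduct_add, smul_mulVec, vecMulVec_mulVec, op_smul_eq_smul,
      dotProduct_smul, dotProduct_smul, dotProduct_smul, dotProduct_comm ν w, smul_eq_mul,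
      smul_eq_mul, smul_eq_mul]
    ring
  · rw [smul_dotProduct, dotProduct_smul, dotProduct_comm _ ν, ← hs_def, smul_eq_mul,
      smul_eq_mul]
    field_simp
    ring

end Matrix

section

variable {Ω ι : Type*} [MeasurableSpace Ω] {μ : Measure Ω} [Fintype ι]

theorem integral_add_sq_of_integral_mul_eq_zero_s13 {f g : Ω → ℝ} (hf : MemLp f 2 μ)
    (hg : MemLp g 2 μ) (hfg : ∫ ω, f ω * g ω ∂μ = 0) :
    ∫ ω, (f ω + g ω) ^ 2 ∂μ = ∫ ω, f ω ^ 2 ∂μ + ∫ ω, g ω ^ 2 ∂μ := by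
  have hf2 : Integrable (fun ω => f ω ^ 2) μ := hf.integrable_sq
  have hfg2 : Integrable (fun ω => 2 * (f ω * g ω)) μ := (hf.integrable_mul hg).const_mul 2
  have h12 : Integrable (fun ω => f ω ^ 2 + 2 * (f ω * g ω)) μ := hf2.add hfg2
  have hsq : ∀ ω, (f ω + g ω) ^ 2 = f ω ^ 2 + 2 * (f ω * g ω) + g ω ^ 2 := fun ω => by ring
  simp_rw [hsq]
  rw [integral_add h12 hg.integrable_sq, integral_add hf2 hfg2, integral_const_mul,
    hfg, mul_zero, add_zero]

theorem memLp_dotProduct {p : ENNReal} {N : ι → Ω → ℝ} (hN : ∀ i, MemLp (N i) p μ) (w : ι → ℝ) :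
    MemLp (fun ω => w ⬝ᵥ fun i => N i ω) p μ :=
  memLp_finsetSum _ fun i _ => (hN i).const_mul (w i)

theorem integral_dotProduct_sq {N : ι → Ω → ℝ} (hN : ∀ i, MemLp (N i) 2 μ) (w : ι → ℝ) :
    ∫ ω, (w ⬝ᵥ fun i => N i ω) ^ 2 ∂μ
      = w ⬝ᵥ (Matrix.of fun i j => ∫ ω, N i ω * N j ω ∂μ) *ᵥ w := by
  have hsq : ∀ ω, (w ⬝ᵥ fun i => N i ω) ^ 2 = ∑ i, ∑ j, w i * (w j * (N i ω * N j ω)) := by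
    intro ω
    simp only [dotProduct, sq, Finset.sum_mul_sum]
    exact Finset.sum_congr rfl fun i _ => Finset.sum_congr rfl fun j _ => by ring
  have hint : ∀ i j, Integrable (fun ω => w i * (w j * (N i ω * N j ω))) μ := fun i j =>
    (((hN i).integrable_mul (hN j)).const_mul _).const_mul _
  simp_rw [hsq]
  rw [integral_finsetSum _ fun i _ => integrable_finsetSum _ fun j _ => hint i j]
  refine Finset.sum_congr rfl fun i _ => ?_
  rw [integral_finsetSum _ fun j _ => hint i j, mulVec, dotProduct, Finset.mul_sum]
  refine Finset.sum_congr rfl fun j _ => ?_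
  rw [integral_const_mul, integral_const_mul, of_apply, mul_comm (w j)]

theorem ProbabilityTheory.IndepFun.integral_mul_dotProduct_eq_zero {X : Ω → ℝ} {N : ι → Ω → ℝ}
    (hind : IndepFun X (fun ω i => N i ω) μ) (hX : MemLp X 2 μ) (hN : ∀ i, MemLp (N i) 2 μ)
    (hXmean : ∫ ω, X ω ∂μ = 0) (w : ι → ℝ) :
    ∫ ω, X ω * (w ⬝ᵥ fun i => N i ω) ∂μ = 0 := by
  have hind' : IndepFun X (fun ω => w ⬝ᵥ fun i => N i ω) μ :=
    hind.comp measurable_id (continuous_const.dotProduct continuous_id).measurable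
  rw [hind'.integral_fun_mul_eq_mul_integral hX.aestronglyMeasurable
    (memLp_dotProduct hN w).aestronglyMeasurable]
  simp [hXmean]

theorem integral_linear_estimation_error_sq {X : Ω → ℝ} {N : ι → Ω → ℝ}
    (hind : IndepFun X (fun ω i => N i ω) μ) (hX : MemLp X 2 μ) (hN : ∀ i, MemLp (N i) 2 μ)
    (hXmean : ∫ ω, X ω ∂μ = 0) (ν w : ι → ℝ) :
    ∫ ω, ((∑ i, w i * (ν i * X ω + N i ω)) - X ω) ^ 2 ∂μ
      = (w ⬝ᵥ ν - 1) ^ 2 * ∫ ω, X ω ^ 2 ∂μ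
        + w ⬝ᵥ (Matrix.of fun i j => ∫ ω, N i ω * N j ω ∂μ) *ᵥ w := by
  have herr : ∀ ω, (∑ i, w i * (ν i * X ω + N i ω)) - X ω
      = (w ⬝ᵥ ν - 1) * X ω + w ⬝ᵥ fun i => N i ω := by
    intro ω
    simp only [dotProduct, mul_add, Finset.sum_add_distrib, ← mul_assoc, ← Finset.sum_mul]
    ring
  have horth : ∫ ω, (w ⬝ᵥ ν - 1) * X ω * (w ⬝ᵥ fun i => N i ω) ∂μ = 0 := by
    simp only [mul_assoc, integral_const_mul,
      hind.integral_mul_dotProduct_eq_zero hX hN hXmean w, mul_zero]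
  simp_rw [herr]
  rw [integral_add_sq_of_integral_mul_eq_zero_s13 (hX.const_mul _) (memLp_dotProduct hN w) horth,
    integral_dotProduct_sq hN w]
  simp only [mul_pow, integral_const_mul]

end

theorem lmmse_characterization_general {Ω : Type*} [MeasurableSpace Ω]
    (μ : Measure Ω) {m : ℕ}
    (X : Ω → ℝ) (hX2 : MemLp X 2 μ)
    (lam : ℝ)
    (hXmean : (∫ ω, X ω ∂μ) = 0) (hXvar : (∫ ω, (X ω) ^ 2 ∂μ) = lam ^ 2)
    (N : Fin m → Ω → ℝ)
    (hN2 : ∀ i, MemLp (N i) 2 μ)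
    (hindep : IndepFun X (fun ω => fun i => N i ω) μ)
    (ν : Fin m → ℝ)
    (K₂ : Matrix (Fin m) (Fin m) ℝ)
    (hK₂ : K₂ = Matrix.of fun i j => ∫ ω, N i ω * N j ω ∂μ)
    (hK₂pos : K₂.PosDef)
    (K₁ : Matrix (Fin m) (Fin m) ℝ)
    (hK₁ : K₁ = K₂ + lam ^ 2 • Matrix.vecMulVec ν ν)
    (SNRa : ℝ) (hSNR : SNRa = K₁.det / K₂.det - 1) :
    IsLeast {e : ℝ | ∃ w : Fin m → ℝ,
        e = ∫ ω, ((∑ i, w i * (ν i * X ω + N i ω)) - X ω) ^ 2 ∂μ}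
      (lam ^ 2 / (1 + SNRa)) := by
  have hSNR' : SNRa = lam ^ 2 * (ν ⬝ᵥ K₂⁻¹ *ᵥ ν) := by
    have hdet : IsUnit K₂.det := (isUnit_iff_isUnit_det _).mp hK₂pos.isUnit
    rw [hSNR, hK₁, ← smul_vecMulVec, det_add_vecMulVec hdet, mulVec_smul, dotProduct_smul,
      smul_eq_mul]
    field_simp [hdet.ne_zero]
    ring
  have hobj : ∀ w, ∫ ω, ((∑ i, w i * (ν i * X ω + N i ω)) - X ω) ^ 2 ∂μ
      = w ⬝ᵥ K₂ *ᵥ w + lam ^ 2 * (w ⬝ᵥ ν - 1) ^ 2 := fun w => by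
    rw [integral_linear_estimation_error_sq hindep hX2 hN2 hXmean, hXvar, ← hK₂]
    ring
  rw [hSNR']
  convert hK₂pos.isLeast_range_dotProduct_mulVec_add_mul_sq (sq_nonneg lam) ν using 1
  ext e
  simp [hobj, eq_comm]

/-- Linear MMSE estimation. For a zero-mean signal `X` with
variance `λ²`, observed as `X̃ = νX + N` with zero-mean noise vector `N`
independent of `X` and positive-definite noise covariance `K₂`, the minimum over
`w` of `E[(wᵀX̃ − X)²]` equals `λ²/(1 + SNR_a)` with
`SNR_a = det K₁ / det K₂ − 1`, `K₁ = K₂ + λ²ννᵀ`, and the minimum is attained. -/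
theorem lmmse_characterization {Ω : Type*} [MeasurableSpace Ω]
    (μ : Measure Ω) [IsProbabilityMeasure μ] {m : ℕ}
    (X : Ω → ℝ) (hXm : Measurable X) (hX2 : MemLp X 2 μ)
    (lam : ℝ) (hlam : 0 < lam)
    (hXmean : (∫ ω, X ω ∂μ) = 0) (hXvar : (∫ ω, (X ω) ^ 2 ∂μ) = lam ^ 2)
    (N : Fin m → Ω → ℝ)
    (hNm : ∀ i, Measurable (N i)) (hN2 : ∀ i, MemLp (N i) 2 μ)
    (hNmean : ∀ i, (∫ ω, N i ω ∂μ) = 0)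
    (hindep : IndepFun X (fun ω => fun i => N i ω) μ)
    (ν : Fin m → ℝ)
    (K₂ : Matrix (Fin m) (Fin m) ℝ)
    (hK₂ : K₂ = Matrix.of fun i j => ∫ ω, N i ω * N j ω ∂μ)
    (hK₂pos : K₂.PosDef)
    (K₁ : Matrix (Fin m) (Fin m) ℝ)
    (hK₁ : K₁ = K₂ + lam ^ 2 • Matrix.vecMulVec ν ν)
    (SNRa : ℝ) (hSNR : SNRa = K₁.det / K₂.det - 1) :
    IsLeast {e : ℝ | ∃ w : Fin m → ℝ,
        e = ∫ ω, ((∑ i, w i * (ν i * X ω + N i ω)) - X ω) ^ 2 ∂μ}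
      (lam ^ 2 / (1 + SNRa)) :=
  lmmse_characterization_general μ X hX2 lam hXmean hXvar N hN2 hindep ν K₂ hK₂ hK₂pos K₁ hK₁ SNRa
    hSNR
end
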